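/- In the Jane–Julie model M₁: ButFor(M₁, (B = 0)) = {B}, the set {J₁, J₂} is a complex cause of (B = 0) in M₁ (it satisfies AC1–AC3), and HP(M₁, (B = 0)) = {J₁, J₂, B}. -/

import Mathlib

namespace HPFramework

open Classical

/-- A causal model in the Halpern–Pearl framework, over exogenous variables `U`,
endogenous variables `V` and value domain `D`.  It packages the causal structure
(the finite ranges of the variables), the DAG (the well-founded `parent` relation),
the structural equations `F` (each depending only on the exogenous variables and the
parents, and taking values in the range), and the context `ctx`. -/
structure CausalModel (U V D : Type) [Fintype U] [Fintype V] where
  rangeU : U → Finset D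
  range : V → Finset D
  rangeU_nonempty : ∀ W, (rangeU W).Nonempty
  range_nonempty : ∀ X, (range X).Nonempty
  parent : V → V → Prop
  acyclic : WellFounded parent
  F : V → (U → D) → (V → D) → D
  F_parents : ∀ X u (a b : V → D), (∀ Y, parent Y X → a Y = b Y) → F X u a = F X u b
  F_range : ∀ X u v, (∀ W, u W ∈ rangeU W) → (∀ Y, v Y ∈ range Y) → F X u v ∈ range X
  ctx : U → D
  ctx_range : ∀ W, ctx W ∈ rangeU W

variable {U V D : Type} [Fintype U] [Fintype V]

/-- The unique solution `S_M` of the system of structural equations of `M`. -/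
noncomputable def sol (M : CausalModel U V D) : V → D :=
  WellFounded.fix M.acyclic fun X ih =>
    M.F X M.ctx fun Y => if h : M.parent Y X then ih Y h else (M.range_nonempty Y).choose

/-- A partial, range-permitted assignment of values to the endogenous variables of `M`. -/
def PAssign (M : CausalModel U V D) : Type :=
  {g : V → Option D // ∀ X d, g X = some d → d ∈ M.range X}

/-- The intervened model `M_[X⃗ ← x⃗]`: the equation of each variable assigned a value
by `g` is replaced by the corresponding constant; other equations are unchanged. -/
noncomputable def intervene (M : CausalModel U V D) (g : PAssign M) : CausalModel U V D where
  rangeU := M.rangeU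
  range := M.range
  rangeU_nonempty := M.rangeU_nonempty
  range_nonempty := M.range_nonempty
  parent := M.parent
  acyclic := M.acyclic
  F := fun X u v => (g.1 X).getD (M.F X u v)
  F_parents := by
    intro X u a b hab
    cases h : g.1 X with
    | none => simp only [h, Option.getD_none]; exact M.F_parents X u a b hab
    | some d => simp [h]
  F_range := by
    intro X u v hu hv
    cases h : g.1 X with
    | none => simpa [h] using M.F_range X u v hu hv
    | some d => simpa [h] using g.2 X d h
  ctx := M.ctx
  ctx_range := M.ctx_range

/-- Basic formulas: Boolean combinations of atoms `(X = x)` with `X` endogenous. -/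
inductive BForm (V D : Type) : Type where
  | atom : V → D → BForm V D
  | not : BForm V D → BForm V D
  | and : BForm V D → BForm V D → BForm V D

/-- Evaluation of a basic formula at an assignment of values to the endogenous variables. -/
def BForm.eval (s : V → D) : BForm V D → Prop
  | .atom X x => s X = x
  | .not φ => ¬ φ.eval s
  | .and φ ψ => φ.eval s ∧ ψ.eval s

/-- `M ⊨ φ` for a basic formula `φ`, evaluated via the solution `S_M`. -/
def Sat (M : CausalModel U V D) (φ : BForm V D) : Prop := (BForm.eval (sol M)) φ

variable [DecidableEq V]

/-- The single intervention `[X ← x]` (with `x` in the range of `X`). -/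
noncomputable def single (M : CausalModel U V D) (X : V) (x : D)
    (hx : x ∈ M.range X) : PAssign M :=
  ⟨fun Y => if Y = X then some x else none, by
    intro Y d h
    simp only at h
    split at h
    next heq => cases h; exact heq ▸ hx
    next => cases h⟩

/-- The but-for theory: `X ∈ ButFor(M,φ)` iff `M ⊨ φ` and there is `x ∈ R(X)` with
`M ⊨ [X ← x] ¬φ`. -/
noncomputable def ButFor (M : CausalModel U V D) (φ : BForm V D) : Set V :=
  {X | Sat M φ ∧ ∃ x, ∃ hx : x ∈ M.range X, ¬ Sat (intervene M (single M X x hx)) φ}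

/-- `ℳ(A)` (relative to `M`): all models obtained from `M` by a (possibly partial)
range-permitted assignment to the variables in `A`, while any assigned variable outside
`A` is held fixed at its actual value in `M`. -/
def MSet (M : CausalModel U V D) (A : Set V) : Set (CausalModel U V D) :=
  {M' | ∃ g : PAssign M,
    (∀ X, X ∉ A → ∀ d, g.1 X = some d → d = sol M X) ∧ M' = intervene M g}

/-- A causal theory: a map assigning to every model and basic formula a set of
endogenous variables (the causes). -/
def CausalTheory (U V D : Type) [Fintype U] [Fintype V] : Type _ :=
  CausalModel U V D → BForm V D → Set V

/-- `X` is a putative cause of `φ` in `M` (w.r.t. the theory `C`). -/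
noncomputable def Putative (C : CausalTheory U V D) (M : CausalModel U V D)
    (φ : BForm V D) (X : V) : Prop :=
  ∃ M' ∈ MSet M (C M φ), sol M X = sol M' X ∧ X ∈ ButFor M' φ

/-- `X` is a preempted cause of `φ` in `M` (w.r.t. `C`): putative but not a cause. -/
noncomputable def Preempted (C : CausalTheory U V D) (M : CausalModel U V D)
    (φ : BForm V D) (X : V) : Prop :=
  Putative C M φ X ∧ X ∉ C M φ

/-- A theory is similarity-based if it recognises at least all but-for causes and at
most all putative causes. -/
noncomputable def SimilarityBased (C : CausalTheory U V D) : Prop :=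
  ∀ M φ, ButFor M φ ⊆ C M φ ∧ ∀ X ∈ C M φ, Putative C M φ X

/-- The principle of presumption. -/
noncomputable def Presumption (C : CausalTheory U V D) : Prop :=
  ∀ M φ X, Preempted C M φ X →
    ∀ M' ∈ MSet M (C M φ), sol M' X = sol M X → X ∈ ButFor M' φ →
      ∃ W, W ∉ C M φ ∧ sol M W ≠ sol M' W

/-- Empirical causal theories (fixed-point characterisation). -/
noncomputable def Empirical (C : CausalTheory U V D) : Prop :=
  ∀ M φ X, X ∈ C M φ ↔
    ∃ M' ∈ MSet M (C M φ), sol M X = sol M' X ∧ X ∈ ButFor M' φ ∧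
      ∀ W, W ∉ C M φ → sol M W = sol M' W

/-- The relation `M₁ ⊑_{C,φ} M₂`. -/
noncomputable def CRel (C : CausalTheory U V D) (φ : BForm V D)
    (M₁ M₂ : CausalModel U V D) : Prop :=
  M₂ ∈ MSet M₁ (C M₁ φ) ∧ Sat M₂ φ ∧ ∀ X, X ∉ C M₁ φ → sol M₁ X = sol M₂ X

/-- The closure property. -/
noncomputable def Closure (C : CausalTheory U V D) : Prop :=
  ∀ (M : CausalModel U V D) (φ : BForm V D) M', CRel C φ M M' → C M' φ ⊆ C M φ

/-- AC1 and AC2 of Halpern's (2015) definition, for the set `Xs`: `M ⊨ φ` and there is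
an intervention assigning (range-permitted) values to all of `Xs` and holding any other
assigned variable fixed at its actual value, after which `¬φ` holds. -/
noncomputable def AC12 (M : CausalModel U V D) (φ : BForm V D) (Xs : Set V) : Prop :=
  Sat M φ ∧ ∃ g : PAssign M,
    (∀ X ∈ Xs, (g.1 X).isSome) ∧
    (∀ X, X ∉ Xs → ∀ d, g.1 X = some d → d = sol M X) ∧
    ¬ Sat (intervene M g) φ

/-- `Xs` is a complex cause of `φ` in `M`: AC1, AC2 and the minimality condition AC3. -/
noncomputable def ComplexCause (M : CausalModel U V D) (φ : BForm V D) (Xs : Set V) : Prop :=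
  AC12 M φ Xs ∧ ∀ Ys : Set V, Ys ⊂ Xs → ¬ AC12 M φ Ys

/-- The HP theory: `X ∈ HP(M,φ)` iff `X` belongs to some complex cause of `φ` in `M`. -/
noncomputable def HP : CausalTheory U V D := fun M φ =>
  {X | ∃ Xs : Set V, X ∈ Xs ∧ ComplexCause M φ Xs}

/-- Helper: a relation admitting a strictly monotone rank function is well-founded. -/
theorem wf_of_rank {α : Type} (r : α → α → Prop) (rk : α → ℕ)
    (h : ∀ a b, r a b → rk a < rk b) : WellFounded r :=
  Subrelation.wf (fun {a b} hr => h a b hr) (InvImage.wf rk Nat.lt_wfRel.wf)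



/-- The endogenous variables of the Jane–Julie models. -/
inductive JVar : Type
  | J1 | J2 | B
deriving DecidableEq

instance : Fintype JVar := ⟨{JVar.J1, JVar.J2, JVar.B}, by intro x; cases x <;> simp⟩

open JVar

/-- The Jane–Julie model `M₁`: ranges `R(U₁) = R(J₁) = {0, 1/2}`,
`R(U₂) = R(J₂) = {1/2, 1}`, `R(B) = {0, 1}`; equations `J₁ = U₁`, `J₂ = U₂`,
`B = 0` if `J₁ + J₂ ≥ 1` and `B = 1` otherwise; context `u = (1/2, 1)`. -/
noncomputable def M1 : CausalModel (Fin 2) JVar ℚ where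
  rangeU := fun i => if i = 0 then {0, 1/2} else {1/2, 1}
  range := fun X => match X with
    | J1 => {0, 1/2}
    | J2 => {1/2, 1}
    | B => {0, 1}
  rangeU_nonempty := by
    intro W; split
    · exact ⟨0, by simp⟩
    · exact ⟨1, by simp⟩
  range_nonempty := by
    intro X
    cases X with
    | J1 => exact ⟨0, by simp⟩
    | J2 => exact ⟨1, by simp⟩
    | B => exact ⟨0, by simp⟩
  parent := fun Y X => (Y = J1 ∨ Y = J2) ∧ X = B
  acyclic := wf_of_rank _ (fun X => match X with | B => 1 | _ => 0)
    (by rintro a b ⟨h1, rfl⟩; rcases h1 with rfl | rfl <;> simp)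
  F := fun X u v => match X with
    | J1 => u 0
    | J2 => u 1
    | B => if 1 ≤ v J1 + v J2 then 0 else 1
  F_parents := by
    intro X u a b hab
    cases X with
    | J1 => rfl
    | J2 => rfl
    | B =>
      show (if 1 ≤ a J1 + a J2 then (0 : ℚ) else 1) = (if 1 ≤ b J1 + b J2 then (0 : ℚ) else 1)
      rw [hab J1 ⟨Or.inl rfl, rfl⟩, hab J2 ⟨Or.inr rfl, rfl⟩]
  F_range := by
    intro X u v hu hv
    cases X with
    | J1 => simpa using hu 0
    | J2 => simpa using hu 1
    | B =>
      show (if 1 ≤ v J1 + v J2 then (0 : ℚ) else 1) ∈ ({0, 1} : Finset ℚ)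
      split <;> simp
  ctx := fun i => if i = 0 then 1/2 else 1
  ctx_range := by intro W; fin_cases W <;> simp

/-- The basic formula `(B = 0)`. -/
noncomputable def φB : BForm JVar ℚ := .atom B 0

end HPFramework

/-!
In every intervened model `J₁ ≥ 0` and `J₂ ≥ 1/2`, so holding `J₁` at `1/2` or `J₂` at `1` keeps
`J₁ + J₂ ≥ 1` and hence `B = 0`: only freeing both (`J₁ = 0`, `J₂ = 1/2`) makes `B = 1`. The
variable `B` is a but-for cause, and a but-for cause `X` always yields the complex cause `{X}`,
since an intervention holding everything at its actual value changes nothing.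
-/

namespace HPFramework

section General

variable {U V D : Type} [Fintype U] [Fintype V]

def PAssign.KeepsActual {M : CausalModel U V D} (g : PAssign M) (X : V) : Prop :=
  ∀ d, g.1 X = some d → d = sol M X

theorem sol_eq (M : CausalModel U V D) (X : V) : sol M X = M.F X M.ctx (sol M) := by
  rw [sol, WellFounded.fix_eq]
  exact M.F_parents X M.ctx _ _ fun Y hY => by simp only [dif_pos hY]

theorem sol_intervene (M : CausalModel U V D) (g : PAssign M) (X : V) :
    sol (intervene M g) X = (g.1 X).getD (M.F X M.ctx (sol (intervene M g))) :=
  sol_eq _ X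

theorem sol_mem_range (M : CausalModel U V D) (X : V) : sol M X ∈ M.range X := by
  induction X using M.acyclic.induction with
  | _ X ih =>
    rw [sol, WellFounded.fix_eq]
    refine M.F_range X M.ctx _ M.ctx_range fun Y => ?_
    split_ifs with hY
    · exact ih Y hY
    · exact (M.range_nonempty Y).choose_spec

theorem sol_intervene_apply_eq {M : CausalModel U V D} (g : PAssign M) (X : V)
    (hX : g.KeepsActual X) (hpar : ∀ Y, M.parent Y X → sol (intervene M g) Y = sol M Y) :
    sol (intervene M g) X = sol M X := by
  rw [sol_intervene]
  cases h : g.1 X with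
  | none => exact (sol_eq M X).symm ▸ M.F_parents X M.ctx _ _ hpar
  | some d => exact hX d h

theorem sol_intervene_eq {M : CausalModel U V D} (g : PAssign M)
    (hg : ∀ X, g.KeepsActual X) : sol (intervene M g) = sol M :=
  funext fun X => M.acyclic.induction X fun X ih => sol_intervene_apply_eq g X (hg X) ih

theorem not_AC12_empty (M : CausalModel U V D) (φ : BForm V D) : ¬ AC12 M φ ∅ := by
  rintro ⟨hφ, g, -, hkeep, hnot⟩
  apply hnot
  rwa [Sat, sol_intervene_eq g fun X => hkeep X (Set.notMem_empty X)]

variable [DecidableEq V]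

theorem single_keepsActual {M : CausalModel U V D} {X Y : V} {x : D} (hx : x ∈ M.range X)
    (hY : Y ≠ X) : (single M X x hx).KeepsActual Y := by
  simp [PAssign.KeepsActual, single, hY]

theorem AC12_singleton_of_mem_butFor {M : CausalModel U V D} {φ : BForm V D} {X : V}
    (h : X ∈ ButFor M φ) : AC12 M φ {X} := by
  obtain ⟨hφ, x, hx, hnot⟩ := h
  refine ⟨hφ, single M X x hx, ?_, fun Y hY => single_keepsActual hx hY, hnot⟩
  rintro Y rfl
  simp [single]

theorem complexCause_singleton_of_mem_butFor {M : CausalModel U V D} {φ : BForm V D} {X : V}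
    (h : X ∈ ButFor M φ) : ComplexCause M φ {X} :=
  ⟨AC12_singleton_of_mem_butFor h, fun Ys hYs => by
    rw [Set.ssubset_singleton_iff.mp hYs]
    exact not_AC12_empty M φ⟩

theorem butFor_subset_HP (M : CausalModel U V D) (φ : BForm V D) : ButFor M φ ⊆ HP M φ :=
  fun X h => ⟨{X}, rfl, complexCause_singleton_of_mem_butFor h⟩

end General

section JaneJulie

open JVar

theorem sol_M1_J1 : sol M1 J1 = 1 / 2 := sol_eq M1 J1

theorem sol_M1_J2 : sol M1 J2 = 1 := sol_eq M1 J2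

theorem sol_M1_B : sol M1 B = 0 := by
  rw [sol_eq]
  show (if (1 : ℚ) ≤ sol M1 J1 + sol M1 J2 then 0 else 1) = 0
  rw [sol_M1_J1, sol_M1_J2]
  norm_num

theorem sat_M1 : Sat M1 φB := sol_M1_B

theorem parent_M1_J1 (Y : JVar) : ¬ M1.parent Y J1 := fun h => nomatch h.2

theorem parent_M1_J2 (Y : JVar) : ¬ M1.parent Y J2 := fun h => nomatch h.2

theorem nonneg_sol_intervene_M1_J1 (g : PAssign M1) : 0 ≤ sol (intervene M1 g) J1 := by
  have h : sol (intervene M1 g) J1 ∈ ({0, 1 / 2} : Finset ℚ) := sol_mem_range (intervene M1 g) J1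
  simp only [Finset.mem_insert, Finset.mem_singleton] at h
  rcases h with h | h <;> norm_num [h]

theorem half_le_sol_intervene_M1_J2 (g : PAssign M1) : 1 / 2 ≤ sol (intervene M1 g) J2 := by
  have h : sol (intervene M1 g) J2 ∈ ({1 / 2, 1} : Finset ℚ) := sol_mem_range (intervene M1 g) J2
  simp only [Finset.mem_insert, Finset.mem_singleton] at h
  rcases h with h | h <;> norm_num [h]

theorem sat_intervene_M1_of_one_le (g : PAssign M1) (hB : g.KeepsActual B)
    (hsum : 1 ≤ sol (intervene M1 g) J1 + sol (intervene M1 g) J2) :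
    Sat (intervene M1 g) φB := by
  show sol (intervene M1 g) B = 0
  rw [sol_intervene]
  show (g.1 B).getD (if (1 : ℚ) ≤ _ then 0 else 1) = 0
  rw [if_pos hsum]
  cases h : g.1 B with
  | none => rfl
  | some d => simpa [sol_M1_B] using hB d h

theorem sat_intervene_M1_of_keepsActual_J1 (g : PAssign M1) (hB : g.KeepsActual B)
    (hJ1 : g.KeepsActual J1) : Sat (intervene M1 g) φB := by
  refine sat_intervene_M1_of_one_le g hB ?_
  rw [sol_intervene_apply_eq g J1 hJ1 fun Y h => absurd h (parent_M1_J1 Y), sol_M1_J1]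
  linarith [half_le_sol_intervene_M1_J2 g]

theorem sat_intervene_M1_of_keepsActual_J2 (g : PAssign M1) (hB : g.KeepsActual B)
    (hJ2 : g.KeepsActual J2) : Sat (intervene M1 g) φB := by
  refine sat_intervene_M1_of_one_le g hB ?_
  rw [sol_intervene_apply_eq g J2 hJ2 fun Y h => absurd h (parent_M1_J2 Y), sol_M1_J2]
  linarith [nonneg_sol_intervene_M1_J1 g]

theorem butFor_M1 : ButFor M1 φB = {B} := by
  ext X
  constructor
  · rintro ⟨-, x, hx, hnot⟩
    cases X with
    | J1 => exact absurd (sat_intervene_M1_of_keepsActual_J2 _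
        (single_keepsActual hx nofun) (single_keepsActual hx nofun)) hnot
    | J2 => exact absurd (sat_intervene_M1_of_keepsActual_J1 _
        (single_keepsActual hx nofun) (single_keepsActual hx nofun)) hnot
    | B => rfl
  · rintro rfl
    refine ⟨sat_M1, 1, by simp [M1], ?_⟩
    show sol _ B ≠ 0
    rw [sol_intervene]
    simp [single]

def lowerJ1J2 : PAssign M1 :=
  ⟨fun X => match X with | J1 => some 0 | J2 => some (1 / 2) | B => none, by
    rintro (_ | _ | _) d h <;> simp_all [M1]⟩

theorem AC12_M1_J1_J2 : AC12 M1 φB {J1, J2} := by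
  refine ⟨sat_M1, lowerJ1J2, ?_, ?_, ?_⟩
  · rintro X (rfl | rfl) <;> rfl
  · rintro (_ | _ | _) hX d hd
    · exact absurd (Or.inl rfl) hX
    · exact absurd (Or.inr rfl) hX
    · cases hd
  · show sol _ B ≠ 0
    rw [sol_intervene]
    show (if (1 : ℚ) ≤ sol (intervene M1 lowerJ1J2) J1 + sol (intervene M1 lowerJ1J2) J2
      then 0 else 1) ≠ 0
    rw [sol_intervene M1 _ J1, sol_intervene M1 _ J2]
    norm_num [lowerJ1J2]

theorem not_AC12_M1_of_ssubset {Ys : Set JVar} (hYs : Ys ⊂ {J1, J2}) : ¬ AC12 M1 φB Ys := by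
  rintro ⟨-, g, -, hkeep, hnot⟩
  have hB : B ∉ Ys := fun h => by simpa using hYs.subset h
  have hJ : J1 ∉ Ys ∨ J2 ∉ Ys := by
    by_contra! h
    exact hYs.2 (by rintro X (rfl | rfl); exacts [h.1, h.2])
  rcases hJ with hJ | hJ
  · exact hnot (sat_intervene_M1_of_keepsActual_J1 g (hkeep B hB) (hkeep J1 hJ))
  · exact hnot (sat_intervene_M1_of_keepsActual_J2 g (hkeep B hB) (hkeep J2 hJ))

theorem complexCause_M1_J1_J2 : ComplexCause M1 φB {J1, J2} :=
  ⟨AC12_M1_J1_J2, fun _ => not_AC12_M1_of_ssubset⟩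

end JaneJulie

open JVar

/-- in the Jane–Julie model `M₁`, `ButFor(M₁,(B=0)) = {B}`, the set
`{J₁, J₂}` is a complex cause of `(B = 0)` in `M₁`, and `HP(M₁,(B=0)) = {J₁, J₂, B}`. -/
theorem jane_julie_M1 :
    ButFor M1 φB = ({B} : Set JVar) ∧
    ComplexCause M1 φB ({J1, J2} : Set JVar) ∧
    HP M1 φB = ({J1, J2, B} : Set JVar) := by
  refine ⟨butFor_M1, complexCause_M1_J1_J2, ?_⟩
  refine Set.Subset.antisymm (fun X _ => by cases X <;> simp) ?_
  rintro X (rfl | rfl | rfl)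
  · exact ⟨_, Or.inl rfl, complexCause_M1_J1_J2⟩
  · exact ⟨_, Or.inr rfl, complexCause_M1_J1_J2⟩
  · exact butFor_subset_HP M1 φB (butFor_M1 ▸ rfl)

end HPFramework
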